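/- Let (X,d) be a metric space, let S ⊆ X be a finite server set, and let c_1,…,c_k ∈ X be clients with k ≤ |S|. Let 0 = L_0 < L_1 < … < L_m = k be batch boundaries, and let ∅ = S_0 ⊆ S_1 ⊆ … ⊆ S_m ⊆ S be server sets such that for each j ∈ {1,…,m}, S_j is the image of some optimal matching of the first L_j clients into S. For each j ∈ {1,…,m}, let N_j : {L_{j−1}+1,…,L_j} → S_j \ S_{j−1} be a bijection of minimum cost Σ_i d(c_i, N_j(i)) among all such bijections. Then the combined map N : {1,…,k} → S, defined by N(i) = N_j(i) for L_{j−1} < i ≤ L_j, is an injective matching of all k clients into S of cost at most (2m − 1)·OPT_k. -/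

import Mathlib

/-- A matching of the first `t` clients (indexed `1,…,t`) into the server set `S`:
an injective assignment whose values on `{1,…,t}` are servers in `S`. -/
def IsMatching {X : Type*} [MetricSpace X] (S : Finset X) (t : ℕ) (f : ℕ → X) : Prop :=
  Set.InjOn f (Set.Icc 1 t) ∧ ∀ j ∈ Set.Icc 1 t, f j ∈ S

/-- The cost of a matching `f` of the first `t` clients `c 1, …, c t`. -/
noncomputable def matchingCost {X : Type*} [MetricSpace X] (t : ℕ) (c f : ℕ → X) : ℝ :=
  ∑ j ∈ Finset.Icc 1 t, dist (c j) (f j)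

/-- `OPT S t c` is the minimum cost of a matching of the first `t` clients into `S`. -/
noncomputable def OPT {X : Type*} [MetricSpace X] (S : Finset X) (t : ℕ) (c : ℕ → X) : ℝ :=
  sInf {r : ℝ | ∃ f : ℕ → X, IsMatching S t f ∧ matchingCost t c f = r}

/-!
Fix a batch `j` and optimal matchings `f` of the first `L j` clients onto `S_j` and `g` of the
first `L (j-1)` clients onto `S_{j-1} ⊆ S_j`. Remove the clients of the earlier batches from `f`
one at a time: a removed client `q` hands its current server `s_q` to the client `w` currently
holding `g q`, and by the triangle inequality
`d(c_w, s_q) ≤ d(c_w, g_q) + d(g_q, c_q) + d(c_q, s_q)` this costs at most `d(c_q, g_q)` more.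
The result is a bijection of batch `j` onto `S_j \ S_{j-1}` of cost at most
`OPT_{L_j} + OPT_{L_{j-1}}`, hence so is `N_j`. Summing over the batches, with `OPT_{L_0} = 0`
and `OPT_{L_j} ≤ OPT_k`, gives `(2m - 1) OPT_k`. Injectivity holds because the batches are sent
to the disjoint sets `S_j \ S_{j-1}`.
-/

open Set

def IsOptimalMatching {X : Type*} [MetricSpace X] (S : Finset X) (t : ℕ) (c f : ℕ → X) :
    Prop :=
  IsMatching S t f ∧ matchingCost t c f = OPT S t c

def IsMinCostBijOn {ι X : Type*} [PseudoMetricSpace X] (c M : ι → X) (s : Finset ι)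
    (T : Set X) : Prop :=
  InjOn M s ∧ M '' s = T ∧ ∀ h : ι → X, InjOn h s → h '' s = T →
    ∑ i ∈ s, dist (c i) (M i) ≤ ∑ i ∈ s, dist (c i) (h i)

lemma IsMinCostBijOn.congr {ι X : Type*} [PseudoMetricSpace X] {c M M' : ι → X} {s : Finset ι}
    {T : Set X} (hM : IsMinCostBijOn c M s T) (h : EqOn M M' s) : IsMinCostBijOn c M' s T := by
  have hsum : ∑ i ∈ s, dist (c i) (M' i) = ∑ i ∈ s, dist (c i) (M i) :=
    Finset.sum_congr rfl fun i hi => by rw [h hi]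
  exact ⟨hM.1.congr h, h.image_eq.symm.trans hM.2.1, fun g hg himg => hsum ▸ hM.2.2 g hg himg⟩

lemma IsMinCostBijOn.mapsTo {ι X : Type*} [PseudoMetricSpace X] {c M : ι → X} {s : Finset ι}
    {T : Set X} (hM : IsMinCostBijOn c M s T) : MapsTo M s T :=
  mapsTo_iff_image_subset.2 hM.2.1.le

section OPT

variable {X : Type*} [MetricSpace X] {S : Finset X} {t k : ℕ} {c f : ℕ → X}

lemma IsMatching.image_subset (hf : IsMatching S t f) : f '' Icc 1 t ⊆ S := by
  rintro _ ⟨i, hi, rfl⟩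
  exact hf.2 i hi

lemma isMatching_zero (S : Finset X) (f : ℕ → X) : IsMatching S 0 f := by
  simp [IsMatching]

lemma matchingCost_nonneg (t : ℕ) (c f : ℕ → X) : 0 ≤ matchingCost t c f :=
  Finset.sum_nonneg fun _ _ => dist_nonneg

lemma OPT_le_matchingCost (hf : IsMatching S t f) : OPT S t c ≤ matchingCost t c f :=
  csInf_le ⟨0, by rintro _ ⟨g, -, rfl⟩; exact matchingCost_nonneg t c g⟩ ⟨f, hf, rfl⟩

lemma matchingCost_zero (c f : ℕ → X) : matchingCost 0 c f = 0 := by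
  simp [matchingCost]

lemma OPT_zero (S : Finset X) (c : ℕ → X) : OPT S 0 c = 0 :=
  le_antisymm ((OPT_le_matchingCost (isMatching_zero S c)).trans_eq (matchingCost_zero c c))
    (Real.sInf_nonneg fun _ ⟨g, _, hg⟩ => hg ▸ matchingCost_nonneg 0 c g)

lemma isOptimalMatching_zero (S : Finset X) (c f : ℕ → X) : IsOptimalMatching S 0 c f :=
  ⟨isMatching_zero S f, by rw [matchingCost_zero, OPT_zero]⟩

lemma OPT_mono (htk : t ≤ k) (hf : IsMatching S k f) : OPT S t c ≤ OPT S k c := by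
  refine le_csInf ⟨_, f, hf, rfl⟩ ?_
  rintro _ ⟨g, hg, rfl⟩
  have hsub : Icc 1 t ⊆ Icc 1 k := Icc_subset_Icc_right htk
  calc OPT S t c ≤ matchingCost t c g :=
        OPT_le_matchingCost ⟨hg.1.mono hsub, fun j hj => hg.2 j (hsub hj)⟩
    _ ≤ matchingCost k c g := Finset.sum_le_sum_of_subset_of_nonneg
        (Finset.Icc_subset_Icc_right htk) fun _ _ _ => dist_nonneg

end OPT

section Exchange

variable {ι X : Type*} [DecidableEq ι] [PseudoMetricSpace X] (c : ι → X)

lemma exists_injOn_erase_sum_dist_le {D : Finset ι} {h : ι → X} (hh : InjOn h D) {q : ι}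
    (hq : q ∈ D) {y : X} (hy : y ∈ h '' D) :
    ∃ h' : ι → X, InjOn h' (D.erase q) ∧ h' '' (D.erase q) = h '' D \ {y} ∧
      ∑ i ∈ D.erase q, dist (c i) (h' i) ≤ ∑ i ∈ D, dist (c i) (h i) + dist (c q) y := by
  obtain ⟨w, hw, rfl⟩ := hy
  have hswap : Equiv.swap w q '' ↑(D.erase q) = ↑(D.erase w) := by
    ext x
    rw [Equiv.image_eq_preimage_symm, Equiv.symm_swap, mem_preimage]
    simp only [Finset.coe_erase, mem_sdiff, Finset.mem_coe, mem_singleton_iff,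
      Equiv.swap_apply_def]
    split_ifs <;> grind
  refine ⟨h ∘ Equiv.swap w q, hh.comp (Equiv.injective _).injOn ?_, ?_, ?_⟩
  · exact mapsTo_iff_image_subset.2
      (hswap.trans_subset (Finset.coe_subset.2 (D.erase_subset w)))
  · rw [image_comp, hswap, Finset.coe_erase,
      hh.image_sdiff_subset (singleton_subset_iff.2 (Finset.mem_coe.2 hw)), image_singleton]
  · rcases eq_or_ne w q with rfl | hwq
    · simp only [Equiv.swap_self, Equiv.coe_refl, Function.comp_id]
      have := Finset.sum_le_sum_of_subset_of_nonneg (D.erase_subset w)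
        (f := fun i => dist (c i) (h i)) fun _ _ _ => dist_nonneg
      linarith [dist_nonneg (x := c w) (y := h w)]
    · have hwD : w ∈ D.erase q := Finset.mem_erase.2 ⟨hwq, hw⟩
      rw [← Finset.add_sum_erase _ _ hwD, ← Finset.add_sum_erase _ _ hq,
        ← Finset.add_sum_erase _ _ hwD]
      have hrest : ∑ i ∈ (D.erase q).erase w, dist (c i) (h (Equiv.swap w q i)) =
          ∑ i ∈ (D.erase q).erase w, dist (c i) (h i) := by
        refine Finset.sum_congr rfl fun i hi => ?_
        obtain ⟨hiw, hiq, -⟩ : i ≠ w ∧ i ≠ q ∧ i ∈ D := by simpa using hi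
        simp [Equiv.swap_apply_of_ne_of_ne hiw hiq]
      simp only [Function.comp_apply, Equiv.swap_apply_left, hrest]
      linarith [dist_triangle4 (c w) (h w) (c q) (h q), dist_comm (h w) (c q)]

lemma exists_injOn_sdiff_sum_dist_le {B P : Finset ι} (hPB : P ⊆ B) {f g : ι → X}
    (hf : InjOn f B) (hg : InjOn g P) (hgf : g '' P ⊆ f '' B) :
    ∃ h : ι → X, InjOn h ↑(B \ P) ∧ h '' ↑(B \ P) = f '' B \ g '' P ∧
      ∑ i ∈ B \ P, dist (c i) (h i) ≤
        ∑ i ∈ B, dist (c i) (f i) + ∑ i ∈ P, dist (c i) (g i) := by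
  induction P using Finset.induction_on with
  | empty => exact ⟨f, by simpa using hf, by simp, by simp⟩
  | insert q P hqP ih =>
    have hPq : (P : Set ι) ⊆ ↑(insert q P) := by simp
    obtain ⟨h, hh, himg, hcost⟩ :=
      ih ((Finset.subset_insert q P).trans hPB) (hg.mono hPq) ((image_mono hPq).trans hgf)
    have hq : q ∈ B \ P := Finset.mem_sdiff.2 ⟨hPB (Finset.mem_insert_self q P), hqP⟩
    have hgq : g q ∈ h '' ↑(B \ P) := by
      rw [himg]
      refine ⟨hgf (mem_image_of_mem g (by simp)), ?_⟩
      rintro ⟨p, hp, hpq⟩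
      exact hqP (hg (hPq hp) (by simp) hpq ▸ hp)
    obtain ⟨h', hh', himg', hcost'⟩ := exists_injOn_erase_sum_dist_le c hh hq hgq
    rw [Finset.sdiff_insert]
    refine ⟨h', hh', ?_, ?_⟩
    · rw [himg', himg, Finset.coe_insert, image_insert_eq, sdiff_sdiff, union_comm,
        singleton_union]
    · rw [Finset.sum_insert hqP]
      linarith [dist_comm (c q) (g q)]

end Exchange

lemma IsMinCostBijOn.sum_dist_le_matchingCost_add {X : Type*} [MetricSpace X]
    {c f g M : ℕ → X} {a b : ℕ} (hab : a ≤ b) (hf : InjOn f (Icc 1 b))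
    (hg : InjOn g (Icc 1 a))
    (hgf : g '' Icc 1 a ⊆ f '' Icc 1 b)
    (hM : IsMinCostBijOn c M (Finset.Ioc a b) (f '' Icc 1 b \ g '' Icc 1 a)) :
    ∑ i ∈ Finset.Ioc a b, dist (c i) (M i) ≤ matchingCost b c f + matchingCost a c g := by
  have hIoc : Finset.Icc 1 b \ Finset.Icc 1 a = Finset.Ioc a b := by
    ext i; simp only [Finset.mem_sdiff, Finset.mem_Icc, Finset.mem_Ioc]; omega
  obtain ⟨h, hh, himg, hcost⟩ := exists_injOn_sdiff_sum_dist_le c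
    (Finset.Icc_subset_Icc_right hab) (by rwa [Finset.coe_Icc]) (by rwa [Finset.coe_Icc])
    (by rwa [Finset.coe_Icc, Finset.coe_Icc])
  simp only [hIoc, Finset.coe_Icc] at hh himg hcost
  exact (hM.2.2 h hh himg).trans hcost

lemma sum_range_add_le {a : ℕ → ℝ} {A : ℝ} {m : ℕ} (h0 : a 0 = 0)
    (ha : ∀ j ≤ m, a j ≤ A) :
    ∑ j ∈ Finset.range m, (a (j + 1) + a j) ≤ 2 * m * A - a m := by
  induction m with
  | zero => simp [h0]
  | succ m ih =>
    rw [Finset.sum_range_succ]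
    push_cast
    linarith [ih fun j hj => ha j (by omega), ha (m + 1) le_rfl]

lemma sum_Ioc_eq_sum_range_sum_Ioc {M : Type*} [AddCommMonoid M] (f : ℕ → M) {L : ℕ → ℕ}
    {m : ℕ} (hL : MonotoneOn L (Iic m)) :
    ∑ i ∈ Finset.Ioc (L 0) (L m), f i =
      ∑ j ∈ Finset.range m, ∑ i ∈ Finset.Ioc (L j) (L (j + 1)), f i := by
  induction m with
  | zero => simp
  | succ m ih =>
    have hle : ∀ {i j}, i ≤ j → j ≤ m + 1 → L i ≤ L j := fun hij hj =>
      hL (mem_Iic.2 (hij.trans hj)) (mem_Iic.2 hj) hij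
    rw [Finset.sum_range_succ, ← ih (hL.mono (Iic_subset_Iic.2 m.le_succ)),
      Finset.sum_Ioc_consecutive f (hle (Nat.zero_le m) m.le_succ) (hle m.le_succ le_rfl)]

lemma injOn_mapsTo_Ioc_of_blocks {X : Type*} {M : ℕ → X} {m : ℕ} {L : ℕ → ℕ}
    {Sv : ℕ → Set X} (hSv : ∀ j < m, Sv j ⊆ Sv (j + 1))
    (hM : ∀ j < m, InjOn M (Ioc (L j) (L (j + 1))) ∧
      MapsTo M (Ioc (L j) (L (j + 1))) (Sv (j + 1) \ Sv j)) :
    InjOn M (Ioc (L 0) (L m)) ∧ MapsTo M (Ioc (L 0) (L m)) (Sv m) := by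
  induction m with
  | zero => simp [mapsTo_empty]
  | succ m ih =>
    obtain ⟨ih_inj, ih_maps⟩ := ih (fun j hj => hSv j (by omega)) (fun j hj => hM j (by omega))
    obtain ⟨hinj, hmaps⟩ := hM m m.lt_add_one
    have hsplit := Ioc_subset_Ioc_union_Ioc (a := L 0) (b := L m) (c := L (m + 1))
    refine ⟨fun x hx y hy hxy => ?_, fun x hx => ?_⟩
    · rcases hsplit hx with hx | hx <;> rcases hsplit hy with hy | hy
      · exact ih_inj hx hy hxy
      · exact ((hmaps hy).2 (hxy ▸ ih_maps hx)).elim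
      · exact ((hmaps hx).2 (hxy ▸ ih_maps hy)).elim
      · exact hinj hx hy hxy
    · rcases hsplit hx with hx | hx
      · exact hSv m m.lt_add_one (ih_maps hx)
      · exact (hmaps hx).1

section Batches

variable {X : Type*} [MetricSpace X] {S : Finset X} {c M : ℕ → X} {k m : ℕ} {L : ℕ → ℕ}
  {Sv : ℕ → Set X}

lemma isMatching_of_blocks (hL0 : L 0 = 0) (hLm : L m = k)
    (hSv : ∀ j < m, Sv j ⊆ Sv (j + 1)) (hSvS : Sv m ⊆ S)
    (hM : ∀ j < m, InjOn M (Ioc (L j) (L (j + 1))) ∧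
      MapsTo M (Ioc (L j) (L (j + 1))) (Sv (j + 1) \ Sv j)) :
    IsMatching S k M := by
  obtain ⟨hinj, hmaps⟩ := injOn_mapsTo_Ioc_of_blocks hSv hM
  rw [hL0, hLm, ← Icc_add_one_left_eq_Ioc, zero_add] at hinj hmaps
  exact ⟨hinj, fun i hi => hSvS (hmaps hi)⟩

lemma matchingCost_le_of_isMinCostBijOn (hL0 : L 0 = 0) (hLm : L m = k)
    (hL : MonotoneOn L (Iic m)) (hSv : ∀ j < m, Sv j ⊆ Sv (j + 1))
    (hopt : ∀ j ≤ m, ∃ f, IsOptimalMatching S (L j) c f ∧ f '' Icc 1 (L j) = Sv j)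
    (hM : ∀ j < m, IsMinCostBijOn c M (Finset.Ioc (L j) (L (j + 1))) (Sv (j + 1) \ Sv j))
    (hMS : IsMatching S k M) :
    matchingCost k c M ≤ (2 * m - 1) * OPT S k c := by
  have hOPT : ∀ j ≤ m, OPT S (L j) c ≤ OPT S k c := fun j hj =>
    OPT_mono (hLm ▸ hL (mem_Iic.2 hj) (mem_Iic.2 le_rfl) hj) hMS
  have hblock : ∀ j ∈ Finset.range m,
      ∑ i ∈ Finset.Ioc (L j) (L (j + 1)), dist (c i) (M i) ≤
        OPT S (L (j + 1)) c + OPT S (L j) c := by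
    intro j hj
    rw [Finset.mem_range] at hj
    obtain ⟨f, hf, hfSv⟩ := hopt (j + 1) hj
    obtain ⟨g, hg, hgSv⟩ := hopt j hj.le
    rw [← hf.2, ← hg.2]
    refine IsMinCostBijOn.sum_dist_le_matchingCost_add
      (hL (mem_Iic.2 hj.le) (mem_Iic.2 hj) j.le_succ) hf.1.1 hg.1.1
      (by rw [hfSv, hgSv]; exact hSv j hj) ?_
    rw [hfSv, hgSv]
    exact hM j hj
  calc matchingCost k c M = ∑ i ∈ Finset.Ioc (L 0) (L m), dist (c i) (M i) := by
        rw [matchingCost, hL0, hLm, ← Finset.Icc_add_one_left_eq_Ioc, zero_add]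
    _ = ∑ j ∈ Finset.range m, ∑ i ∈ Finset.Ioc (L j) (L (j + 1)), dist (c i) (M i) :=
        sum_Ioc_eq_sum_range_sum_Ioc _ hL
    _ ≤ ∑ j ∈ Finset.range m, (OPT S (L (j + 1)) c + OPT S (L j) c) :=
        Finset.sum_le_sum hblock
    _ ≤ 2 * m * OPT S k c - OPT S (L m) c := sum_range_add_le (by rw [hL0, OPT_zero]) hOPT
    _ = (2 * m - 1) * OPT S k c := by rw [hLm]; ring

end Batches

theorem stmt7_general {X : Type*} [MetricSpace X] (S : Finset X) (c : ℕ → X) (k m : ℕ)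
    (L : ℕ → ℕ) (hL0 : L 0 = 0) (hLm : L m = k)
    (hLmono : ∀ j < m, L j < L (j + 1))
    (Sv : ℕ → Set X) (hSv0 : Sv 0 = ∅)
    (hSvchain : ∀ j < m, Sv j ⊆ Sv (j + 1))
    (hSvopt : ∀ j, 1 ≤ j → j ≤ m → ∃ f : ℕ → X,
        IsMatching S (L j) f ∧ matchingCost (L j) c f = OPT S (L j) c ∧
        Sv j = f '' Set.Icc 1 (L j))
    (N : ℕ → ℕ → X)
    (hNbij : ∀ j, 1 ≤ j → j ≤ m →
        Set.InjOn (N j) (Set.Icc (L (j - 1) + 1) (L j)) ∧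
        N j '' Set.Icc (L (j - 1) + 1) (L j) = Sv j \ Sv (j - 1))
    (hNopt : ∀ j, 1 ≤ j → j ≤ m → ∀ h : ℕ → X,
        Set.InjOn h (Set.Icc (L (j - 1) + 1) (L j)) →
        h '' Set.Icc (L (j - 1) + 1) (L j) = Sv j \ Sv (j - 1) →
        ∑ i ∈ Finset.Icc (L (j - 1) + 1) (L j), dist (c i) (N j i) ≤
          ∑ i ∈ Finset.Icc (L (j - 1) + 1) (L j), dist (c i) (h i))
    (Nc : ℕ → X)
    (hNc : ∀ j, 1 ≤ j → j ≤ m → ∀ i ∈ Set.Icc (L (j - 1) + 1) (L j), Nc i = N j i) :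
    IsMatching S k Nc ∧ matchingCost k c Nc ≤ (2 * (m : ℝ) - 1) * OPT S k c := by
  have hLmon : MonotoneOn L (Iic m) := monotoneOn_of_le_succ ordConnected_Iic
    fun a _ _ ha => by
      rw [Order.succ_eq_add_one] at ha ⊢
      exact (hLmono a ha).le
  have hopt : ∀ j ≤ m, ∃ f, IsOptimalMatching S (L j) c f ∧ f '' Icc 1 (L j) = Sv j := by
    intro j hj
    rcases j.eq_zero_or_pos with rfl | hj0
    · rw [hL0, hSv0]
      exact ⟨c, isOptimalMatching_zero S c c, by simp⟩
    · obtain ⟨f, hfM, hfC, hfSv⟩ := hSvopt j hj0 hj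
      exact ⟨f, ⟨hfM, hfC⟩, hfSv.symm⟩
  have hN : ∀ j < m,
      IsMinCostBijOn c Nc (Finset.Ioc (L j) (L (j + 1))) (Sv (j + 1) \ Sv j) := by
    intro j hj
    have hbij := hNbij (j + 1) (by omega) hj
    have hmin := hNopt (j + 1) (by omega) hj
    have hNcj := hNc (j + 1) (by omega) hj
    simp only [Nat.add_sub_cancel, Icc_add_one_left_eq_Ioc, Finset.Icc_add_one_left_eq_Ioc]
      at hbij hmin hNcj
    refine IsMinCostBijOn.congr ?_ fun i hi => (hNcj i (by simpa using hi)).symm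
    simpa only [IsMinCostBijOn, Finset.coe_Ioc] using ⟨hbij.1, hbij.2, hmin⟩
  obtain ⟨f, hf, hfSv⟩ := hopt m le_rfl
  have hmatch : IsMatching S k Nc :=
    isMatching_of_blocks hL0 hLm hSvchain (hfSv ▸ hf.1.image_subset) fun j hj => by
      rw [← Finset.coe_Ioc]
      exact ⟨(hN j hj).1, (hN j hj).mapsTo⟩
  exact ⟨hmatch, matchingCost_le_of_isMinCostBijOn hL0 hLm hLmon hSvchain hopt hN hmatch⟩

/-- Batched Permutation bound: with batch boundaries `0 = L 0 < L 1 < … < L m = k`, nested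
server sets `∅ = Sv 0 ⊆ Sv 1 ⊆ … ⊆ Sv m` where each `Sv j` is the image of some optimal
matching of the first `L j` clients, and with `N j` a minimum-cost bijection from the `j`-th
batch of clients onto `Sv j \ Sv (j-1)`, the combined assignment `Nc` (agreeing with `N j` on
the `j`-th batch) is an injective matching of all `k` clients into `S` of cost at most
`(2m − 1) · OPT_k`. -/
theorem stmt7 {X : Type*} [MetricSpace X] (S : Finset X) (c : ℕ → X) (k m : ℕ)
    (hk : k ≤ S.card)
    (L : ℕ → ℕ) (hL0 : L 0 = 0) (hLm : L m = k)
    (hLmono : ∀ j < m, L j < L (j + 1))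
    (Sv : ℕ → Set X) (hSv0 : Sv 0 = ∅)
    (hSvchain : ∀ j < m, Sv j ⊆ Sv (j + 1))
    (hSvopt : ∀ j, 1 ≤ j → j ≤ m → ∃ f : ℕ → X,
        IsMatching S (L j) f ∧ matchingCost (L j) c f = OPT S (L j) c ∧
        Sv j = f '' Set.Icc 1 (L j))
    (N : ℕ → ℕ → X)
    (hNbij : ∀ j, 1 ≤ j → j ≤ m →
        Set.InjOn (N j) (Set.Icc (L (j - 1) + 1) (L j)) ∧
        N j '' Set.Icc (L (j - 1) + 1) (L j) = Sv j \ Sv (j - 1))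
    (hNopt : ∀ j, 1 ≤ j → j ≤ m → ∀ h : ℕ → X,
        Set.InjOn h (Set.Icc (L (j - 1) + 1) (L j)) →
        h '' Set.Icc (L (j - 1) + 1) (L j) = Sv j \ Sv (j - 1) →
        ∑ i ∈ Finset.Icc (L (j - 1) + 1) (L j), dist (c i) (N j i) ≤
          ∑ i ∈ Finset.Icc (L (j - 1) + 1) (L j), dist (c i) (h i))
    (Nc : ℕ → X)
    (hNc : ∀ j, 1 ≤ j → j ≤ m → ∀ i ∈ Set.Icc (L (j - 1) + 1) (L j), Nc i = N j i) :
    IsMatching S k Nc ∧ matchingCost k c Nc ≤ (2 * (m : ℝ) - 1) * OPT S k c :=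
  stmt7_general S c k m L hL0 hLm hLmono Sv hSv0 hSvchain hSvopt N hNbij hNopt Nc hNc
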